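/- arXiv:2110.12305 — 4 statements merged into one kernel-verified Lean document; each statement's English description precedes it below -/
import Mathlib

section
/- Let (A, L, ρ) be a Lie–Rinehart algebra over ℝ with a connection ∇, and let α : L^m → A be an alternating A-multilinear map which is equivariant. Then the Lie algebroid differential of α simplifies to (ᴱdα)(e₁,…,e_{m+1}) = − Σ_{1≤i<j≤m+1} (−1)^{i+j} α([e_i,e_j]^∇, e₁,…,ê_i,…,ê_j,…,e_{m+1}) for all e₁,…,e_{m+1} ∈ L. -/
open scoped BigOperators

/-- The tuple obtained from `e : Fin (m+1) → L` by inserting `b` in front and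
omitting the entries at positions `i` and `j` (intended for `i < j`). -/
def omit2cons {L : Type*} {m : ℕ} (b : L) (e : Fin (m + 1) → L) (i j : Fin (m + 1)) :
    Fin m → L := fun k =>
  if (k : ℕ) = 0 then b
  else e ⟨if (k : ℕ) - 1 < (i : ℕ) then (k : ℕ) - 1
          else if (k : ℕ) < (j : ℕ) then (k : ℕ) else (k : ℕ) + 1,
        by have := k.isLt; split_ifs <;> omega⟩

/-- The tuple obtained from `f : Fin m → L` by inserting `b` in front and omitting
the entry at position `i`. -/
def consOmit1 {L : Type*} {m : ℕ} (b : L) (f : Fin m → L) (i : Fin m) : Fin m → L := fun k =>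
  if (k : ℕ) = 0 then b
  else f ⟨if (k : ℕ) - 1 < (i : ℕ) then (k : ℕ) - 1 else (k : ℕ),
        by have := k.isLt; split_ifs <;> omega⟩

/-- The Lie algebroid (Lie–Rinehart) differential of an `m`-form `α`, as a raw function:
`(ᴱdα)(e₁,…,e_{m+1}) = Σᵢ (−1)^{i−1} ρ(eᵢ)(α(e₁,…,êᵢ,…,e_{m+1}))
  + Σ_{i<j} (−1)^{i+j} α(⁅eᵢ,e_j⁆, e₁,…,êᵢ,…,ê_j,…,e_{m+1})`. -/
def eDiff {A : Type*} [CommRing A] [Algebra ℝ A]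
    {L : Type*} [LieRing L] [LieAlgebra ℝ L] [Module A L]
    (ρ : L →ₗ[A] Derivation ℝ A A) {m : ℕ}
    (α : (Fin m → L) → A) (e : Fin (m + 1) → L) : A :=
  (∑ i : Fin (m + 1), (-1 : ℤ) ^ (i : ℕ) • ρ (e i) (α (e ∘ i.succAbove)))
    + ∑ i : Fin (m + 1), ∑ j : Fin (m + 1),
        if i < j then (-1 : ℤ) ^ ((i : ℕ) + (j : ℕ)) • α (omit2cons ⁅e i, e j⁆ e i j) else 0

/-- The induced connection on `A`-valued `m`-forms on `L`:
`(∇_X α)(e₁,…,e_m) = X(α(e₁,…,e_m)) − Σᵢ α(e₁,…,∇_X eᵢ,…,e_m)`. -/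
def connForm {A : Type*} [CommRing A] [Algebra ℝ A]
    {L : Type*} [LieRing L] [LieAlgebra ℝ L] [Module A L]
    (D : Derivation ℝ A A → L → L) {m : ℕ}
    (X : Derivation ℝ A A) (α : (Fin m → L) → A) (f : Fin m → L) : A :=
  X (α f) - ∑ i : Fin m, α (Function.update f i (D X (f i)))

/-- The covariantized bracket `[e₁,e₂]^∇ = ⁅e₁,e₂⁆ − ∇_{ρ(e₁)}e₂ + ∇_{ρ(e₂)}e₁`. -/
def covBracket {A : Type*} [CommRing A] [Algebra ℝ A]
    {L : Type*} [LieRing L] [LieAlgebra ℝ L] [Module A L]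
    (ρ : L →ₗ[A] Derivation ℝ A A) (D : Derivation ℝ A A → L → L) (e₁ e₂ : L) : L :=
  ⁅e₁, e₂⁆ - D (ρ e₁) e₂ + D (ρ e₂) e₁

set_option linter.unusedSectionVars false

section Aux
variable {A : Type*} [CommRing A] [Algebra ℝ A]
  {L : Type*} [LieRing L] [LieAlgebra ℝ L] [Module A L]

lemma succAbove_val {n : ℕ} (i : Fin (n + 2)) (k : Fin (n + 1)) :
    ((i.succAbove k : Fin (n + 2)) : ℕ) = if (k : ℕ) < (i : ℕ) then (k : ℕ) else (k : ℕ) + 1 := by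
  rcases lt_or_ge (Fin.castSucc k) i with h | h
  · rw [Fin.succAbove_of_castSucc_lt _ _ h, if_pos (by simpa [Fin.lt_def] using h)]
    simp
  · rw [Fin.succAbove_of_le_castSucc _ _ h, if_neg (by simp [Fin.le_def] at h; omega)]
    simp

lemma update_eq_consOmit1_comp {n : ℕ} (b : L) (f : Fin (n + 1) → L) (k : Fin (n + 1)) :
    Function.update f k b = consOmit1 b f k ∘ (Fin.cycleRange k) := by
  funext t
  rcases lt_trichotomy t k with h | h | h
  · have hv : ((t + 1 : Fin (n + 1)) : ℕ) = (t : ℕ) + 1 :=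
      Fin.val_add_one_of_lt (lt_of_lt_of_le h (Fin.le_last k))
    have ht := Fin.lt_def.mp h
    rw [Function.comp_apply, Fin.cycleRange_of_lt h, Function.update_of_ne h.ne]
    simp only [consOmit1, hv]
    rw [if_neg (by omega)]
    congr 1
    apply Fin.ext
    simp only [Fin.val_mk]
    rw [if_pos (by omega)]
    omega
  · subst h
    rw [Function.comp_apply, Fin.cycleRange_self, Function.update_self]
    simp [consOmit1]
  · have ht := Fin.lt_def.mp h
    rw [Function.comp_apply, Fin.cycleRange_of_gt h, Function.update_of_ne h.ne']
    simp only [consOmit1]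
    rw [if_neg (by omega)]
    congr 1
    apply Fin.ext
    simp only [Fin.val_mk]
    rw [if_neg (by omega)]

lemma alt_update_eq {n : ℕ} (α : AlternatingMap A L A (Fin (n + 1)))
    (f : Fin (n + 1) → L) (k : Fin (n + 1)) (b : L) :
    α (Function.update f k b) = ((-1 : ℤ) ^ (k : ℕ)) • α (consOmit1 b f k) := by
  rw [update_eq_consOmit1_comp, AlternatingMap.map_perm, Fin.sign_cycleRange]
  simp [Units.smul_def]

lemma consOmit1_succAbove_of_lt {n : ℕ} (b : L) (e : Fin (n + 2) → L) (i : Fin (n + 2))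
    (k : Fin (n + 1)) (h : (k : ℕ) < (i : ℕ)) :
    consOmit1 b (e ∘ i.succAbove) k = omit2cons b e (Fin.castSucc k) i := by
  funext t
  simp only [consOmit1, omit2cons, Function.comp_apply, Fin.coe_castSucc]
  by_cases h0 : (t : ℕ) = 0
  · simp [h0]
  · rw [if_neg h0, if_neg h0]
    congr 1
    apply Fin.ext
    rw [succAbove_val]
    have ht := t.isLt
    simp only [Fin.val_mk]
    split_ifs <;> omega

lemma consOmit1_succAbove_of_ge {n : ℕ} (b : L) (e : Fin (n + 2) → L) (i : Fin (n + 2))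
    (k : Fin (n + 1)) (h : (i : ℕ) ≤ (k : ℕ)) :
    consOmit1 b (e ∘ i.succAbove) k = omit2cons b e i (Fin.succ k) := by
  funext t
  simp only [consOmit1, omit2cons, Function.comp_apply, Fin.val_succ]
  by_cases h0 : (t : ℕ) = 0
  · simp [h0]
  · rw [if_neg h0, if_neg h0]
    congr 1
    apply Fin.ext
    rw [succAbove_val]
    have ht := t.isLt
    simp only [Fin.val_mk]
    split_ifs <;> omega

lemma omit2cons_eq_update {n : ℕ} (b c : L) (e : Fin (n + 2) → L) (i j : Fin (n + 2)) :
    omit2cons b e i j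
      = Function.update (omit2cons c e i j) (⟨0, Nat.succ_pos n⟩ : Fin (n + 1)) b := by
  funext t
  by_cases h : t = (⟨0, Nat.succ_pos n⟩ : Fin (n + 1))
  · subst h; simp [omit2cons, Function.update]
  · rw [Function.update_of_ne h]
    have h0 : (t : ℕ) ≠ 0 := fun hh => h (Fin.ext hh)
    simp [omit2cons, h0]

lemma alt_omit2cons_add {n : ℕ} (α : AlternatingMap A L A (Fin (n + 1)))
    (x y : L) (e : Fin (n + 2) → L) (i j : Fin (n + 2)) :
    α (omit2cons (x + y) e i j) = α (omit2cons x e i j) + α (omit2cons y e i j) := by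
  rw [omit2cons_eq_update (x + y) x e i j, omit2cons_eq_update x x e i j,
    omit2cons_eq_update y x e i j, AlternatingMap.map_update_add]
  simp [Function.update_idem]

lemma alt_omit2cons_neg {n : ℕ} (α : AlternatingMap A L A (Fin (n + 1)))
    (x : L) (e : Fin (n + 2) → L) (i j : Fin (n + 2)) :
    α (omit2cons (-x) e i j) = -α (omit2cons x e i j) := by
  rw [omit2cons_eq_update (-x) x e i j, omit2cons_eq_update x x e i j,
    AlternatingMap.map_update_neg]
  simp [Function.update_idem]

lemma covBracket_skew (ρ : L →ₗ[A] Derivation ℝ A A) (D : Derivation ℝ A A → L → L)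
    (a b : L) : covBracket ρ D a b = -covBracket ρ D b a := by
  have h : ⁅a, b⁆ = -⁅b, a⁆ := (lie_skew a b).symm
  simp only [covBracket, h]
  abel

lemma alt_omit2cons_cov {n : ℕ} (ρ : L →ₗ[A] Derivation ℝ A A)
    (D : Derivation ℝ A A → L → L) (α : AlternatingMap A L A (Fin (n + 1)))
    (x y : L) (e : Fin (n + 2) → L) (i j : Fin (n + 2)) :
    α (omit2cons (covBracket ρ D x y) e i j)
      = α (omit2cons ⁅x, y⁆ e i j) - α (omit2cons (D (ρ x) y) e i j)
        + α (omit2cons (D (ρ y) x) e i j) := by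
  rw [show covBracket ρ D x y = (⁅x, y⁆ + -(D (ρ x) y)) + D (ρ y) x by
      rw [covBracket]; abel,
    alt_omit2cons_add, alt_omit2cons_add, alt_omit2cons_neg]
  abel

end Aux

set_option maxHeartbeats 1000000 in
/-- If `α : Lᵐ → A` is an equivariant alternating `A`-multilinear form on a
Lie–Rinehart algebra with connection, then its Lie algebroid differential simplifies to
`(ᴱdα)(e₁,…,e_{m+1}) = − Σ_{i<j} (−1)^{i+j} α([eᵢ,e_j]^∇, e₁,…,êᵢ,…,ê_j,…,e_{m+1})`. -/
theorem eDiff_of_equivariant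
    {A : Type*} [CommRing A] [Algebra ℝ A]
    {L : Type*} [LieRing L] [LieAlgebra ℝ L] [Module A L]
    (ρ : L →ₗ[A] Derivation ℝ A A)
    (hanchor : ∀ e₁ e₂ : L, ρ ⁅e₁, e₂⁆ = ⁅ρ e₁, ρ e₂⁆)
    (hleibniz : ∀ (a : A) (e₁ e₂ : L), ⁅e₁, a • e₂⁆ = a • ⁅e₁, e₂⁆ + ρ e₁ a • e₂)
    (D : Derivation ℝ A A → L → L)
    (hDaddX : ∀ (X Y : Derivation ℝ A A) (e : L), D (X + Y) e = D X e + D Y e)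
    (hDsmulX : ∀ (a : A) (X : Derivation ℝ A A) (e : L), D (a • X) e = a • D X e)
    (hDadd : ∀ (X : Derivation ℝ A A) (e₁ e₂ : L), D X (e₁ + e₂) = D X e₁ + D X e₂)
    (hDsmulR : ∀ (X : Derivation ℝ A A) (r : ℝ) (e : L), D X (r • e) = r • D X e)
    (hDleibniz : ∀ (X : Derivation ℝ A A) (a : A) (e : L), D X (a • e) = a • D X e + X a • e)
    {m : ℕ} (α : AlternatingMap A L A (Fin m))
    (hequiv : ∀ (e : L) (f : Fin m → L),
      connForm D (ρ e) ⇑α f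
        = ∑ i : Fin m, (-1 : ℤ) ^ (i : ℕ) • α (consOmit1 (covBracket ρ D e (f i)) f i))
    (e : Fin (m + 1) → L) :
    eDiff ρ ⇑α e =
      - ∑ i : Fin (m + 1), ∑ j : Fin (m + 1),
          if i < j then
            (-1 : ℤ) ^ ((i : ℕ) + (j : ℕ)) •
              α (omit2cons (covBracket ρ D (e i) (e j)) e i j)
          else 0 := by
  classical
  rcases m with _ | n
  · have h0 : ∀ (x : L) (f : Fin 0 → L), (ρ x) (α f) = 0 := by
      intro x f
      have h := hequiv x f
      simpa [connForm] using h
    simp [eDiff, h0, Fin.sum_univ_one]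
  · -- abbreviation for the paired summand coming from the equivariance identity
    set H : Fin (n + 2) → Fin (n + 2) → A := fun i j =>
      if (j : ℕ) < (i : ℕ) then
        ((-1 : ℤ) ^ ((i : ℕ) + (j : ℕ))) •
          (α (omit2cons (covBracket ρ D (e i) (e j)) e j i)
            + α (omit2cons (D (ρ (e i)) (e j)) e j i))
      else
        (-((-1 : ℤ) ^ ((i : ℕ) + (j : ℕ)))) •
          (α (omit2cons (covBracket ρ D (e i) (e j)) e i j)
            + α (omit2cons (D (ρ (e i)) (e j)) e i j)) with hH
    have hrho : ∀ i : Fin (n + 2),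
        (ρ (e i)) (α (e ∘ i.succAbove))
          = ∑ k : Fin (n + 1),
              (((-1 : ℤ) ^ (k : ℕ)) •
                  α (consOmit1 (covBracket ρ D (e i) (e (i.succAbove k))) (e ∘ i.succAbove) k)
                + ((-1 : ℤ) ^ (k : ℕ)) •
                  α (consOmit1 (D (ρ (e i)) (e (i.succAbove k))) (e ∘ i.succAbove) k)) := by
      intro i
      have h1 := hequiv (e i) (e ∘ i.succAbove)
      rw [connForm, sub_eq_iff_eq_add] at h1
      rw [h1, Finset.sum_add_distrib]
      congr 1
      apply Finset.sum_congr rfl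
      intro k _
      exact alt_update_eq α (e ∘ i.succAbove) k _
    have hmain : ∀ i : Fin (n + 2),
        ((-1 : ℤ) ^ (i : ℕ)) • ((ρ (e i)) (α (e ∘ i.succAbove)) : A)
          = ∑ j : Fin (n + 2), if j = i then 0 else H i j := by
      intro i
      rw [Fin.sum_univ_succAbove (fun j => if j = i then (0 : A) else H i j) i]
      simp only [eq_self_iff_true, if_true, zero_add]
      rw [hrho i, Finset.smul_sum]
      apply Finset.sum_congr rfl
      intro k _
      rw [if_neg (Fin.succAbove_ne i k)]
      by_cases hk : (k : ℕ) < (i : ℕ)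
      · have hcs : i.succAbove k = Fin.castSucc k :=
          Fin.succAbove_of_castSucc_lt _ _ (by rw [Fin.lt_def, Fin.coe_castSucc]; exact hk)
        rw [hcs, consOmit1_succAbove_of_lt _ _ _ _ hk, consOmit1_succAbove_of_lt _ _ _ _ hk]
        simp only [hH, Fin.coe_castSucc]
        rw [if_pos hk, smul_add, smul_smul, smul_smul, ← pow_add, ← smul_add]
      · have hk' : (i : ℕ) ≤ (k : ℕ) := le_of_not_gt hk
        have hcs : i.succAbove k = Fin.succ k :=
          Fin.succAbove_of_le_castSucc _ _ (by rw [Fin.le_def, Fin.coe_castSucc]; exact hk')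
        rw [hcs, consOmit1_succAbove_of_ge _ _ _ _ hk', consOmit1_succAbove_of_ge _ _ _ _ hk']
        simp only [hH, Fin.val_succ]
        rw [if_neg (by omega), smul_add, smul_smul, smul_smul, ← pow_add, ← smul_add]
        congr 1
        rw [show (i : ℕ) + ((k : ℕ) + 1) = ((i : ℕ) + (k : ℕ)) + 1 by omega, pow_succ]
        ring
    have hpair : ∀ i j : Fin (n + 2), i < j →
        (H i j + H j i) + ((-1 : ℤ) ^ ((i : ℕ) + (j : ℕ))) • α (omit2cons ⁅e i, e j⁆ e i j)
          = -(((-1 : ℤ) ^ ((i : ℕ) + (j : ℕ))) •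
              α (omit2cons (covBracket ρ D (e i) (e j)) e i j)) := by
      intro i j hij
      have hij' : (i : ℕ) < (j : ℕ) := hij
      simp only [hH]
      rw [if_neg (show ¬((j : ℕ) < (i : ℕ)) by omega), if_pos hij',
        Nat.add_comm (j : ℕ) (i : ℕ), covBracket_skew ρ D (e j) (e i), alt_omit2cons_neg]
      have hc := alt_omit2cons_cov ρ D α (e i) (e j) e i j
      rw [hc]
      simp only [smul_add, smul_sub, smul_neg, neg_smul, neg_add, neg_neg, neg_sub]
      abel
    rw [eDiff, Finset.sum_congr rfl (fun i _ => hmain i)]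
    have hsplit : (∑ i : Fin (n + 2), ∑ j : Fin (n + 2), if j = i then (0 : A) else H i j)
        = ∑ i : Fin (n + 2), ∑ j : Fin (n + 2), if i < j then H i j + H j i else 0 := by
      have h1 : (∑ i : Fin (n + 2), ∑ j : Fin (n + 2), if j = i then (0 : A) else H i j)
          = ∑ i : Fin (n + 2), ∑ j : Fin (n + 2),
              ((if i < j then H i j else 0) + (if j < i then H i j else 0)) := by
        apply Finset.sum_congr rfl; intro i _
        apply Finset.sum_congr rfl; intro j _
        rcases lt_trichotomy i j with h | h | h
        · rw [if_neg h.ne', if_pos h, if_neg (asymm h), add_zero]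
        · subst h; simp
        · rw [if_neg h.ne, if_neg (asymm h), if_pos h, zero_add]
      have h2 : (∑ i : Fin (n + 2), ∑ j : Fin (n + 2), if j < i then H i j else (0 : A))
          = ∑ i : Fin (n + 2), ∑ j : Fin (n + 2), if i < j then H j i else 0 :=
        Finset.sum_comm
      rw [h1]
      simp only [Finset.sum_add_distrib]
      rw [h2, ← Finset.sum_add_distrib]
      apply Finset.sum_congr rfl; intro i _
      rw [← Finset.sum_add_distrib]
      apply Finset.sum_congr rfl; intro j _
      split_ifs <;> simp
    rw [hsplit, ← Finset.sum_add_distrib, ← Finset.sum_neg_distrib]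
    apply Finset.sum_congr rfl; intro i _
    rw [← Finset.sum_add_distrib, ← Finset.sum_neg_distrib]
    apply Finset.sum_congr rfl; intro j _
    by_cases hij : i < j
    · rw [if_pos hij, if_pos hij, if_pos hij]
      exact hpair i j hij
    · rw [if_neg hij, if_neg hij, if_neg hij]
      simp
end

section
/- (Equivariant forms vanish under ᴱd on the Lie kernel.) Let (A, L, ρ) be a Lie–Rinehart algebra over ℝ with a connection ∇, and let α : L^m → A be an alternating A-multilinear map which is equivariant. If e₁,…,e_{m+1} ∈ L are such that Σ_{1≤i<j≤m+1} (−1)^{i+j} [e_i,e_j]^∇ ∧ e₁ ∧ … ∧ ê_i ∧ … ∧ ê_j ∧ … ∧ e_{m+1} = 0 in the m-th exterior power of the A-module L (i.e., e₁∧…∧e_{m+1} lies in the Lie kernel), then (ᴱdα)(e₁,…,e_{m+1}) = 0. -/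
open scoped BigOperators

section helpers

variable {L : Type*} {n : ℕ}

lemma consOmit1_comp_cycleRange (b : L) (f : Fin (n+1) → L) (k : Fin (n+1)) :
    (consOmit1 b f k) ∘ ⇑(k.cycleRange) = Function.update f k b := by
  funext j
  rcases lt_trichotomy j k with h | h | h
  · have h1 : k.cycleRange j = j + 1 := Fin.cycleRange_of_lt h
    have h2 : ((j + 1 : Fin (n+1)) : ℕ) = (j : ℕ) + 1 := by
      rw [Fin.val_add_one_of_lt (lt_of_lt_of_le h (Fin.le_last k))]
    have hjk : (j : ℕ) < (k : ℕ) := h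
    simp only [Function.comp_apply, h1, consOmit1, h2, Function.update_apply]
    rw [if_neg (show ¬((j:ℕ) + 1 = 0) by omega), if_neg (Fin.ne_of_lt h)]
    congr 1
    apply Fin.ext
    show (if (j:ℕ) + 1 - 1 < (k:ℕ) then (j:ℕ) + 1 - 1 else (j:ℕ) + 1) = (j:ℕ)
    split_ifs <;> omega
  · subst h
    simp [consOmit1, Function.comp_apply, Fin.cycleRange_self]
  · have h1 : k.cycleRange j = j := Fin.cycleRange_of_gt h
    have hjk : (k : ℕ) < (j : ℕ) := h
    simp only [Function.comp_apply, h1, consOmit1, Function.update_apply]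
    rw [if_neg (show ¬((j:ℕ) = 0) by omega), if_neg (Fin.ne_of_gt h)]
    congr 1
    apply Fin.ext
    show (if (j:ℕ) - 1 < (k:ℕ) then (j:ℕ) - 1 else (j:ℕ)) = (j:ℕ)
    split_ifs <;> omega

lemma consOmit1_eq_update_zero (b c : L) (f : Fin (n+1) → L) (k : Fin (n+1)) :
    consOmit1 b f k = Function.update (consOmit1 c f k) 0 b := by
  funext l
  rw [Function.update_apply]
  by_cases hl : l = 0
  · subst hl; simp [consOmit1]
  · have : (l : ℕ) ≠ 0 := fun h => hl (Fin.ext h)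
    rw [if_neg hl]
    simp [consOmit1, this]

lemma val_succAbove' {m : ℕ} (p : Fin (m+1)) (i : Fin m) :
    ((p.succAbove i) : ℕ) = if (i:ℕ) < (p:ℕ) then (i:ℕ) else (i:ℕ) + 1 := by
  rcases lt_or_ge (Fin.castSucc i) p with h | h
  · rw [Fin.succAbove_of_castSucc_lt _ _ h, if_pos (by simpa [Fin.lt_def] using h)]
    rfl
  · rw [Fin.succAbove_of_le_castSucc _ _ h, if_neg (by simpa [Fin.le_def, Nat.not_lt] using h),
      Fin.val_succ]

lemma omit2cons_eq_consOmit1_left {m : ℕ} (e : Fin (m+1) → L)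
    {i j : Fin (m+1)} (h : i < j) (b : L) :
    omit2cons b e i j = consOmit1 b (e ∘ i.succAbove)
      ⟨(j:ℕ) - 1, by have := j.isLt; have : (i:ℕ) < (j:ℕ) := h; omega⟩ := by
  have hij : (i:ℕ) < (j:ℕ) := h
  funext k
  simp only [omit2cons, consOmit1, Function.comp_apply]
  by_cases hk : (k:ℕ) = 0
  · simp [hk]
  · rw [if_neg hk, if_neg hk]
    congr 1
    apply Fin.ext
    rw [val_succAbove']
    simp only [Fin.val_mk]
    have hkm := k.isLt
    show (if (k:ℕ) - 1 < (i:ℕ) then (k:ℕ) - 1 else if (k:ℕ) < (j:ℕ) then (k:ℕ) else (k:ℕ)+1)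
      = _
    split_ifs <;> omega

lemma omit2cons_eq_consOmit1_right {m : ℕ} (e : Fin (m+1) → L)
    {i j : Fin (m+1)} (h : i < j) (b : L) :
    omit2cons b e i j = consOmit1 b (e ∘ j.succAbove)
      ⟨(i:ℕ), by have := j.isLt; have : (i:ℕ) < (j:ℕ) := h; omega⟩ := by
  have hij : (i:ℕ) < (j:ℕ) := h
  funext k
  simp only [omit2cons, consOmit1, Function.comp_apply]
  by_cases hk : (k:ℕ) = 0
  · simp [hk]
  · rw [if_neg hk, if_neg hk]
    congr 1
    apply Fin.ext
    rw [val_succAbove']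
    simp only [Fin.val_mk]
    have hkm := k.isLt
    show (if (k:ℕ) - 1 < (i:ℕ) then (k:ℕ) - 1 else if (k:ℕ) < (j:ℕ) then (k:ℕ) else (k:ℕ)+1)
      = _
    split_ifs <;> omega

lemma omit2cons_succAbove_left {m : ℕ} (e : Fin (m+2) → L) (i : Fin (m+2)) (k : Fin (m+1))
    (hki : (i:ℕ) ≤ (k:ℕ)) (b : L) :
    omit2cons b e i (i.succAbove k) = consOmit1 b (e ∘ i.succAbove) k := by
  have hval : ((i.succAbove k) : ℕ) = (k:ℕ) + 1 := by
    rw [val_succAbove', if_neg (not_lt.mpr hki)]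
  have hlt : i < i.succAbove k := by rw [Fin.lt_def, hval]; omega
  rw [omit2cons_eq_consOmit1_left e hlt b]
  exact congrArg (consOmit1 b (e ∘ i.succAbove)) (Fin.ext (by simp [hval]))

lemma omit2cons_succAbove_right {m : ℕ} (e : Fin (m+2) → L) (i : Fin (m+2)) (k : Fin (m+1))
    (hki : (k:ℕ) < (i:ℕ)) (b : L) :
    omit2cons b e (i.succAbove k) i = consOmit1 b (e ∘ i.succAbove) k := by
  have hval : ((i.succAbove k) : ℕ) = (k:ℕ) := by rw [val_succAbove', if_pos hki]
  have hlt : i.succAbove k < i := by rw [Fin.lt_def, hval]; exact hki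
  rw [omit2cons_eq_consOmit1_right e hlt b]
  exact congrArg (consOmit1 b (e ∘ i.succAbove)) (Fin.ext hval)

end helpers

set_option linter.unusedSectionVars false

section alt

variable {A : Type*} [CommRing A] [Algebra ℝ A]
  {L : Type*} [LieRing L] [LieAlgebra ℝ L] [Module A L]
  {n : ℕ} (α : AlternatingMap A L A (Fin (n+1)))

lemma alpha_update_eq (x : L) (f : Fin (n+1) → L) (k : Fin (n+1)) :
    α (Function.update f k x) = (-1 : ℤ) ^ (k : ℕ) • α (consOmit1 x f k) := by
  rw [← consOmit1_comp_cycleRange x f k, AlternatingMap.map_perm, Fin.sign_cycleRange]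
  simp [Units.smul_def]

lemma alpha_consOmit1_add (x y : L) (f : Fin (n+1) → L) (k : Fin (n+1)) :
    α (consOmit1 (x + y) f k) = α (consOmit1 x f k) + α (consOmit1 y f k) := by
  rw [consOmit1_eq_update_zero (x+y) x, consOmit1_eq_update_zero y x,
    show consOmit1 x f k = Function.update (consOmit1 x f k) 0 x from
      (Function.update_eq_self_iff.mpr (by simp [consOmit1])).symm]
  simp only [Function.update_idem]
  exact α.map_update_add _ _ _ _

lemma alpha_consOmit1_zero (f : Fin (n+1) → L) (k : Fin (n+1)) :
    α (consOmit1 (0 : L) f k) = 0 := by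
  rw [consOmit1_eq_update_zero (0:L) 0 f k]
  exact α.toMultilinearMap.map_update_zero _ _

lemma alpha_consOmit1_neg (x : L) (f : Fin (n+1) → L) (k : Fin (n+1)) :
    α (consOmit1 (-x) f k) = - α (consOmit1 x f k) := by
  have := alpha_consOmit1_add α (-x) x f k
  rw [neg_add_cancel, alpha_consOmit1_zero] at this
  exact eq_neg_of_add_eq_zero_left this.symm

lemma alpha_consOmit1_sub (x y : L) (f : Fin (n+1) → L) (k : Fin (n+1)) :
    α (consOmit1 (x - y) f k) = α (consOmit1 x f k) - α (consOmit1 y f k) := by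
  rw [sub_eq_add_neg, alpha_consOmit1_add, alpha_consOmit1_neg, sub_eq_add_neg]

end alt

/-- (Equivariant forms vanish under `ᴱd` on the Lie kernel.) If `α : Lᵐ → A`
is an equivariant alternating `A`-multilinear form on a Lie–Rinehart algebra with connection,
and `e₁ ∧ … ∧ e_{m+1}` lies in the Lie kernel, i.e.
`Σ_{i<j} (−1)^{i+j} [eᵢ,e_j]^∇ ∧ e₁ ∧ … ∧ êᵢ ∧ … ∧ ê_j ∧ … ∧ e_{m+1} = 0` in the `m`-th
exterior power of the `A`-module `L`, then `(ᴱdα)(e₁,…,e_{m+1}) = 0`. -/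
theorem eDiff_eq_zero_of_equivariant_of_lieKernel
    {A : Type*} [CommRing A] [Algebra ℝ A]
    {L : Type*} [LieRing L] [LieAlgebra ℝ L] [Module A L]
    (ρ : L →ₗ[A] Derivation ℝ A A)
    (hanchor : ∀ e₁ e₂ : L, ρ ⁅e₁, e₂⁆ = ⁅ρ e₁, ρ e₂⁆)
    (hleibniz : ∀ (a : A) (e₁ e₂ : L), ⁅e₁, a • e₂⁆ = a • ⁅e₁, e₂⁆ + ρ e₁ a • e₂)
    (D : Derivation ℝ A A → L → L)
    (hDaddX : ∀ (X Y : Derivation ℝ A A) (e : L), D (X + Y) e = D X e + D Y e)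
    (hDsmulX : ∀ (a : A) (X : Derivation ℝ A A) (e : L), D (a • X) e = a • D X e)
    (hDadd : ∀ (X : Derivation ℝ A A) (e₁ e₂ : L), D X (e₁ + e₂) = D X e₁ + D X e₂)
    (hDsmulR : ∀ (X : Derivation ℝ A A) (r : ℝ) (e : L), D X (r • e) = r • D X e)
    (hDleibniz : ∀ (X : Derivation ℝ A A) (a : A) (e : L), D X (a • e) = a • D X e + X a • e)
    {m : ℕ} (α : AlternatingMap A L A (Fin m))
    (hequiv : ∀ (e : L) (f : Fin m → L),
      connForm D (ρ e) ⇑α f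
        = ∑ i : Fin m, (-1 : ℤ) ^ (i : ℕ) • α (consOmit1 (covBracket ρ D e (f i)) f i))
    (e : Fin (m + 1) → L)
    (hker : (∑ i : Fin (m + 1), ∑ j : Fin (m + 1),
        if i < j then
          (-1 : ℤ) ^ ((i : ℕ) + (j : ℕ)) •
            ExteriorAlgebra.ιMulti A m (omit2cons (covBracket ρ D (e i) (e j)) e i j)
        else 0) = 0) :
    eDiff ρ ⇑α e = 0 := by
  classical
  rcases Nat.eq_zero_or_pos m with hm | hm
  · subst hm
    have h0 := hequiv (e 0) (e ∘ (0 : Fin 1).succAbove)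
    simp only [connForm, Finset.univ_eq_empty, Finset.sum_empty, sub_zero,
      Fin.succAbove_zero] at h0
    simp [eDiff, Fin.sum_univ_one, h0, show ¬((0 : Fin 1) < 0) from lt_irrefl _]
  obtain ⟨n, rfl⟩ : ∃ n, m = n + 1 := ⟨m - 1, by omega⟩
  -- Step 1: from the kernel hypothesis, the alternating sum of α on covariant brackets vanishes
  have hFα : ∀ v : Fin (n+1) → L,
      ExteriorAlgebra.liftAlternating (R := A)
        (fun i => if h : i = n + 1 then α.domDomCongr (finCongr h.symm) else 0)
        (ExteriorAlgebra.ιMulti A (n+1) v) = α v := by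
    intro v
    rw [ExteriorAlgebra.liftAlternating_apply_ιMulti, dif_pos rfl]
    simp
  have hsum : (∑ i : Fin (n+2), ∑ j : Fin (n+2),
      if i < j then (-1 : ℤ) ^ ((i:ℕ)+(j:ℕ)) •
        α (omit2cons (covBracket ρ D (e i) (e j)) e i j) else 0) = 0 := by
    have h2 := congrArg (ExteriorAlgebra.liftAlternating (R := A)
        (fun i => if h : i = n + 1 then α.domDomCongr (finCongr h.symm) else 0)) hker
    rw [map_zero, map_sum] at h2
    refine Eq.trans ?_ h2
    refine Finset.sum_congr rfl fun i _ => ?_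
    rw [map_sum]
    refine Finset.sum_congr rfl fun j _ => ?_
    split_ifs with h
    · rw [map_zsmul, hFα]
    · rw [map_zero]
  -- Step 2: restated equivariance
  have hρ : ∀ i : Fin (n+2), ρ (e i) (α (e ∘ i.succAbove))
      = ∑ k : Fin (n+1), (-1:ℤ)^(k:ℕ) •
          α (consOmit1 (⁅e i, e (i.succAbove k)⁆ + D (ρ (e (i.succAbove k))) (e i))
            (e ∘ i.succAbove) k) := by
    intro i
    have h1 := hequiv (e i) (e ∘ i.succAbove)
    rw [connForm, sub_eq_iff_eq_add] at h1
    rw [h1, ← Finset.sum_add_distrib]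
    refine Finset.sum_congr rfl fun k _ => ?_
    rw [alpha_update_eq, ← smul_add, ← alpha_consOmit1_add]
    have harg : covBracket ρ D (e i) ((e ∘ i.succAbove) k) + D (ρ (e i)) ((e ∘ i.succAbove) k)
        = ⁅e i, e (i.succAbove k)⁆ + D (ρ (e (i.succAbove k))) (e i) := by
      simp only [covBracket, Function.comp_apply]
      abel
    rw [harg]
  -- The pair function G
  set G : Fin (n+2) → Fin (n+2) → A := fun i j =>
    if i < j then
      (-1:ℤ)^((i:ℕ)+(j:ℕ)+1) • α (omit2cons (⁅e i, e j⁆ + D (ρ (e j)) (e i)) e i j)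
    else if j < i then
      (-1:ℤ)^((i:ℕ)+(j:ℕ)) • α (omit2cons (⁅e i, e j⁆ + D (ρ (e j)) (e i)) e j i)
    else 0 with hGdef
  -- Step 3: each anchor term is a row sum of G
  have hGi : ∀ i : Fin (n+2),
      (-1:ℤ)^(i:ℕ) • ρ (e i) (α (e ∘ i.succAbove)) = ∑ j, G i j := by
    intro i
    rw [Fin.sum_univ_succAbove (G i) i]
    have hGii : G i i = 0 := by simp [hGdef]
    rw [hGii, zero_add, hρ i, Finset.smul_sum]
    refine Finset.sum_congr rfl fun k _ => ?_
    rcases lt_or_ge (k:ℕ) (i:ℕ) with hki | hki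
    · have hval : ((i.succAbove k) : ℕ) = (k:ℕ) := by
        rw [val_succAbove', if_pos hki]
      have hlt : i.succAbove k < i := by rw [Fin.lt_def, hval]; exact hki
      simp only [hGdef]
      rw [if_neg (asymm hlt), if_pos hlt, omit2cons_succAbove_right e i k hki, hval,
        smul_smul, ← pow_add]
    · have hval : ((i.succAbove k) : ℕ) = (k:ℕ) + 1 := by
        rw [val_succAbove', if_neg (not_lt.mpr hki)]
      have hlt : i < i.succAbove k := by rw [Fin.lt_def, hval]; omega
      have hsign : (-1:ℤ)^((i:ℕ)+((k:ℕ)+1)+1) = (-1)^((i:ℕ)+(k:ℕ)) := by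
        rw [show (i:ℕ)+((k:ℕ)+1)+1 = (i:ℕ)+(k:ℕ)+2 from by ring, pow_add]
        norm_num
      simp only [hGdef]
      rw [if_pos hlt, omit2cons_succAbove_left e i k hki, hval, hsign, smul_smul, ← pow_add]
  -- Step 4: combine pairs
  have hGpair : (∑ i : Fin (n+2), ∑ j : Fin (n+2), G i j)
      = ∑ i : Fin (n+2), ∑ j : Fin (n+2), (if i < j then
          (-1:ℤ)^((i:ℕ)+(j:ℕ)+1) • (α (omit2cons ⁅e i, e j⁆ e i j)
            + α (omit2cons (covBracket ρ D (e i) (e j)) e i j)) else 0) := by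
    have hsplit : ∀ i j : Fin (n+2),
        G i j = (if i < j then G i j else 0) + (if j < i then G i j else 0) := by
      intro i j
      rcases lt_trichotomy i j with h | h | h
      · rw [if_pos h, if_neg (asymm h), add_zero]
      · subst h; simp [hGdef]
      · rw [if_neg (asymm h), if_pos h, zero_add]
    rw [show (∑ i : Fin (n+2), ∑ j : Fin (n+2), G i j)
        = ∑ i : Fin (n+2), ∑ j : Fin (n+2),
            ((if i < j then G i j else 0) + (if j < i then G i j else 0)) from
      Finset.sum_congr rfl fun i _ => Finset.sum_congr rfl fun j _ => hsplit i j]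
    simp only [Finset.sum_add_distrib]
    rw [show (∑ i : Fin (n+2), ∑ j : Fin (n+2), if j < i then G i j else 0)
        = ∑ j : Fin (n+2), ∑ i : Fin (n+2), if j < i then G i j else 0 from
      Finset.sum_comm]
    rw [← Finset.sum_add_distrib]
    refine Finset.sum_congr rfl fun i _ => ?_
    rw [← Finset.sum_add_distrib]
    refine Finset.sum_congr rfl fun j _ => ?_
    -- here the inner summand of the second sum is `if i < j then G j i else 0`
    by_cases h : i < j
    · rw [if_pos h, if_pos h, if_pos h]
      simp only [hGdef]
      rw [if_pos h, if_neg (asymm h), if_pos h]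
      simp only [omit2cons_eq_consOmit1_right e h, covBracket]
      rw [← lie_skew (e i) (e j)]
      simp only [alpha_consOmit1_add, alpha_consOmit1_sub, alpha_consOmit1_neg]
      simp only [zsmul_eq_mul]
      push_cast
      ring
    · rw [if_neg h, if_neg h, if_neg h, add_zero]
  -- Step 5: assemble
  show (∑ i : Fin (n+2), (-1 : ℤ) ^ (i : ℕ) • ρ (e i) (α (e ∘ i.succAbove)))
    + (∑ i : Fin (n+2), ∑ j : Fin (n+2),
        if i < j then (-1 : ℤ) ^ ((i : ℕ) + (j : ℕ)) • α (omit2cons ⁅e i, e j⁆ e i j) else 0)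
    = 0
  rw [show (∑ i : Fin (n+2), (-1 : ℤ) ^ (i : ℕ) • ρ (e i) (α (e ∘ i.succAbove)))
      = ∑ i : Fin (n+2), ∑ j : Fin (n+2), G i j from
    Finset.sum_congr rfl fun i _ => hGi i]
  rw [hGpair, ← Finset.sum_add_distrib]
  have hfinal : ∀ i j : Fin (n+2),
      ((if i < j then
          (-1:ℤ)^((i:ℕ)+(j:ℕ)+1) • (α (omit2cons ⁅e i, e j⁆ e i j)
            + α (omit2cons (covBracket ρ D (e i) (e j)) e i j)) else 0)
        + (if i < j then (-1 : ℤ) ^ ((i : ℕ) + (j : ℕ)) • α (omit2cons ⁅e i, e j⁆ e i j) else 0))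
      = -(if i < j then (-1 : ℤ) ^ ((i : ℕ) + (j : ℕ)) •
            α (omit2cons (covBracket ρ D (e i) (e j)) e i j) else 0) := by
    intro i j
    split_ifs with h
    · simp only [zsmul_eq_mul]
      push_cast
      ring
    · simp
  calc (∑ i : Fin (n+2), ((∑ j : Fin (n+2), if i < j then
          (-1:ℤ)^((i:ℕ)+(j:ℕ)+1) • (α (omit2cons ⁅e i, e j⁆ e i j)
            + α (omit2cons (covBracket ρ D (e i) (e j)) e i j)) else 0)
        + ∑ j : Fin (n+2),
            if i < j then (-1 : ℤ) ^ ((i : ℕ) + (j : ℕ)) • α (omit2cons ⁅e i, e j⁆ e i j) else 0))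
      = ∑ i : Fin (n+2), ∑ j : Fin (n+2),
          -(if i < j then (-1 : ℤ) ^ ((i : ℕ) + (j : ℕ)) •
              α (omit2cons (covBracket ρ D (e i) (e j)) e i j) else 0) := by
        refine Finset.sum_congr rfl fun i _ => ?_
        rw [← Finset.sum_add_distrib]
        exact Finset.sum_congr rfl fun j _ => hfinal i j
    _ = 0 := by
        simp only [Finset.sum_neg_distrib]
        rw [hsum, neg_zero]
end

section
/- (A homotopy momentum map is a weak homotopy momentum map, degree-k component.) Let A be a commutative ℝ-algebra, 𝔤 a real Lie algebra, and ρ : 𝔤 → Der_ℝ(A) a Lie algebra homomorphism. Fix n ≥ 1 and 1 ≤ k ≤ n−1, let ω be an alternating A-multilinear (n+1)-form on Der_ℝ(A), and let μ̂_{k−1} : 𝔤^{n−k+1} → Ω^{k−1} and μ̂_k : 𝔤^{n−k} → Ω^k be alternating ℝ-multilinear maps. Suppose the homotopy momentum map equation d(μ̂_{k−1}(e₁,…,e_{n−k+1})) + (d_CE μ̂_k)(e₁,…,e_{n−k+1}) = (−1)^{n−k+1} (ι_ρ^{n+1−k}ω)(e₁,…,e_{n+1−k}) holds in Ω^k for all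 e₁,…,e_{n+1−k} ∈ 𝔤. Then for all e₁,…,e_{n+1−k} ∈ 𝔤 with Σ_{i<j} (−1)^{i+j} ⁅e_i,e_j⁆ ∧ e₁ ∧ … ∧ ê_i ∧ … ∧ ê_j ∧ … ∧ e_{n+1−k} = 0 in ∧^{n−k}𝔤 (Lie kernel elements), one has d(μ̂_{k−1}(e₁,…,e_{n+1−k})) = (−1)^{n−k+1} (ι_ρ^{n+1−k}ω)(e₁,…,e_{n+1−k}). -/
open scoped BigOperators

/-- The Koszul exterior derivative of a raw `q`-form `β` on the derivations of `A`:
`(dβ)(X₁,…,X_{q+1}) = Σᵢ (−1)^{i−1} Xᵢ(β(X₁,…,X̂ᵢ,…,X_{q+1}))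
  + Σ_{i<j} (−1)^{i+j} β(⁅Xᵢ,X_j⁆, X₁,…,X̂ᵢ,…,X̂_j,…,X_{q+1})`. -/
def koszulD {A : Type*} [CommRing A] [Algebra ℝ A] {q : ℕ}
    (β : (Fin q → Derivation ℝ A A) → A) (X : Fin (q + 1) → Derivation ℝ A A) : A :=
  (∑ i : Fin (q + 1), (-1 : ℤ) ^ (i : ℕ) • (X i) (β (X ∘ i.succAbove)))
    + ∑ i : Fin (q + 1), ∑ j : Fin (q + 1),
        if i < j then (-1 : ℤ) ^ ((i : ℕ) + (j : ℕ)) • β (omit2cons ⁅X i, X j⁆ X i j) else 0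

/-- (A homotopy momentum map is a weak homotopy momentum map, degree-`k`
component.)  Here `n = p + q + 1`, `k = q + 1`, so `n − k = p ≥ 1`; `μ̂_{k−1}` has arity
`n − k + 1 = p + 1` in `𝔤` with values in `Ω^{k−1} = Ω^q`, `μ̂_k` has arity `n − k = p` with
values in `Ω^k = Ω^{q+1}`, and `ω` is an `(n+1) = (p+1)+(q+1)`-form on the derivations.
If the homotopy momentum map equation
`d(μ̂_{k−1}(e₁,…)) + (d_CE μ̂_k)(e₁,…) = (−1)^{n−k+1} (ι_ρ^{n+1−k}ω)(e₁,…)` holds, then on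
Lie-kernel elements `d(μ̂_{k−1}(e₁,…)) = (−1)^{n−k+1} (ι_ρ^{n+1−k}ω)(e₁,…)`. -/
theorem weak_homotopy_momentum_map_of_homotopy_momentum_map
    {A : Type*} [CommRing A] [Algebra ℝ A]
    {𝔤 : Type*} [LieRing 𝔤] [LieAlgebra ℝ 𝔤]
    (ρ : 𝔤 →ₗ[ℝ] Derivation ℝ A A)
    (hρ : ∀ e₁ e₂ : 𝔤, ρ ⁅e₁, e₂⁆ = ⁅ρ e₁, ρ e₂⁆)
    {p q : ℕ} (hp : 1 ≤ p)
    (ω : AlternatingMap A (Derivation ℝ A A) A (Fin (p + 1 + (q + 1))))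
    (μkm1 : AlternatingMap ℝ 𝔤 (AlternatingMap A (Derivation ℝ A A) A (Fin q)) (Fin (p + 1)))
    (μk : AlternatingMap ℝ 𝔤 (AlternatingMap A (Derivation ℝ A A) A (Fin (q + 1))) (Fin p))
    (hmm : ∀ (e : Fin (p + 1) → 𝔤) (X : Fin (q + 1) → Derivation ℝ A A),
      koszulD ⇑(μkm1 e) X
        + (∑ i : Fin (p + 1), ∑ j : Fin (p + 1),
            if i < j then
              (-1 : ℤ) ^ ((i : ℕ) + (j : ℕ)) • (μk (omit2cons ⁅e i, e j⁆ e i j)) X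
            else 0)
        = ((-1 : ℤ) ^ (p + 1)) • ω (Fin.append (fun i : Fin (p + 1) => ρ (e i.rev)) X)) :
    ∀ (e : Fin (p + 1) → 𝔤),
      (∑ i : Fin (p + 1), ∑ j : Fin (p + 1),
          if i < j then
            (-1 : ℤ) ^ ((i : ℕ) + (j : ℕ)) •
              ExteriorAlgebra.ιMulti ℝ p (omit2cons ⁅e i, e j⁆ e i j)
          else 0) = 0 →
      ∀ X : Fin (q + 1) → Derivation ℝ A A,
        koszulD ⇑(μkm1 e) X
          = ((-1 : ℤ) ^ (p + 1)) • ω (Fin.append (fun i : Fin (p + 1) => ρ (e i.rev)) X) := by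
  intro e hker X
  have h := hmm e X
  -- evaluation at X as an ℝ-linear map
  let evalX : AlternatingMap A (Derivation ℝ A A) A (Fin (q + 1)) →ₗ[ℝ] A :=
    { toFun := fun f => f X
      map_add' := fun f g => rfl
      map_smul' := fun c f => rfl }
  -- the degree-p alternating map e' ↦ μk e' X
  let g : 𝔤 [⋀^Fin p]→ₗ[ℝ] A := evalX.compAlternatingMap μk
  let f : ∀ i : ℕ, 𝔤 [⋀^Fin i]→ₗ[ℝ] A := fun i =>
    if h : i = p then h ▸ g else 0
  have key : (∑ i : Fin (p + 1), ∑ j : Fin (p + 1),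
      if i < j then
        (-1 : ℤ) ^ ((i : ℕ) + (j : ℕ)) • (μk (omit2cons ⁅e i, e j⁆ e i j)) X
      else 0) = 0 := by
    have := congrArg (ExteriorAlgebra.liftAlternating (R := ℝ) (M := 𝔤) (N := A) f) hker
    rw [map_zero, map_sum] at this
    refine Eq.trans ?_ this
    refine Finset.sum_congr rfl fun i _ => ?_
    rw [map_sum]
    refine Finset.sum_congr rfl fun j _ => ?_
    split_ifs with hij
    · rw [map_zsmul, ExteriorAlgebra.liftAlternating_apply_ιMulti]
      simp [f, g, evalX]
    · exact (map_zero (ExteriorAlgebra.liftAlternating (R := ℝ) (M := 𝔤) (N := A) f)).symm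
  rw [key, add_zero] at h
  exact h
end

section
/- (n = 1: homotopy momentum sections, homotopy momentum maps and momentum maps agree.) Let A be a commutative ℝ-algebra, 𝔤 a real Lie algebra, ρ : 𝔤 → Der_ℝ(A) a Lie algebra homomorphism, ω : Der_ℝ(A) × Der_ℝ(A) → A an alternating A-bilinear 2-form, and μ₀ : 𝔤 → A an ℝ-linear map satisfying (MM1): X(μ₀(e)) = −ω(ρ(e), X) for all e ∈ 𝔤 and X ∈ Der_ℝ(A). Then the following are equivalent: (MM2) ρ(e₁)(μ₀(e₂)) − ρ(e₂)(μ₀(e₁)) − μ₀(⁅e₁,e₂⁆) = ω(ρ(e₁), ρ(e₂)) for all e₁,e₂ ∈ 𝔤; (MM3) μ₀(⁅e₁,e₂⁆) = ρ(e₁)(μ₀(e₂)) for all e₁,e₂ ∈ 𝔤. Hence under (MM1), μ₀ is a homotopy momentum section for the action Lie algebroid if and only if it is a momentum map. -/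
/-- (`n = 1`: homotopy momentum sections, homotopy momentum maps and momentum
maps agree.) Let `A` be a commutative `ℝ`-algebra, `𝔤` a real Lie algebra,
`ρ : 𝔤 → Der_ℝ(A)` a Lie algebra homomorphism, `ω` an alternating `A`-bilinear `2`-form on
derivations, and `μ₀ : 𝔤 → A` an `ℝ`-linear map satisfying
(MM1) `X(μ₀(e)) = −ω(ρ(e), X)`. Then the following are equivalent:
(MM2) `ρ(e₁)(μ₀(e₂)) − ρ(e₂)(μ₀(e₁)) − μ₀(⁅e₁,e₂⁆) = ω(ρ(e₁), ρ(e₂))` for all `e₁, e₂`;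
(MM3) `μ₀(⁅e₁,e₂⁆) = ρ(e₁)(μ₀(e₂))` for all `e₁, e₂`. -/
theorem momentum_section_iff_momentum_map
    {A : Type*} [CommRing A] [Algebra ℝ A]
    {𝔤 : Type*} [LieRing 𝔤] [LieAlgebra ℝ 𝔤]
    (ρ : 𝔤 →ₗ[ℝ] Derivation ℝ A A)
    (hρ : ∀ e₁ e₂ : 𝔤, ρ ⁅e₁, e₂⁆ = ⁅ρ e₁, ρ e₂⁆)
    (ω : AlternatingMap A (Derivation ℝ A A) A (Fin 2))
    (μ₀ : 𝔤 →ₗ[ℝ] A)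
    (hMM1 : ∀ (e : 𝔤) (X : Derivation ℝ A A), X (μ₀ e) = - ω ![ρ e, X]) :
    (∀ e₁ e₂ : 𝔤,
        ρ e₁ (μ₀ e₂) - ρ e₂ (μ₀ e₁) - μ₀ ⁅e₁, e₂⁆ = ω ![ρ e₁, ρ e₂])
      ↔ (∀ e₁ e₂ : 𝔤, μ₀ ⁅e₁, e₂⁆ = ρ e₁ (μ₀ e₂)) := by
  constructor
  · intro h e₁ e₂
    have h2 := h e₁ e₂
    rw [hMM1 e₁ (ρ e₂)] at h2
    linear_combination -h2
  · intro h e₁ e₂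
    rw [h e₁ e₂, hMM1 e₁ (ρ e₂)]
    ring
end
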